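/- For any partition μ with at most n parts and any positive integer r, the product of the power sum symmetric polynomial p_r(x_1,...,x_n) with the Schur polynomial s_μ(x_1,...,x_n) equals the sum over all partitions λ ⊇ μ such that λ/μ is a border strip of size r of (-1)^{ht(λ/μ)} s_λ(x_1,...,x_n), where ht(λ/μ) is one less than the number of nonempty rows of λ/μ. -/

import Mathlib

open scoped BigOperators

noncomputable section

/-- An integer partition: a weakly decreasing, eventually zero sequence of naturals. -/
structure IntPartition where
  part : ℕ → ℕ
  antitone : ∀ i j, i ≤ j → part j ≤ part i
  finite : ∃ N, ∀ i, N ≤ i → part i = 0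

namespace IntPartition

instance : LE IntPartition := ⟨fun μ ν => ∀ i, μ.part i ≤ ν.part i⟩

/-- The number of nonzero parts of a partition. -/
def len (μ : IntPartition) : ℕ :=
  Nat.find (p := fun N => μ.part N = 0)
    (by obtain ⟨N, hN⟩ := μ.finite; exact ⟨N, hN N le_rfl⟩)

/-- The size `|μ|` of a partition. -/
def size (μ : IntPartition) : ℕ := ∑ i ∈ Finset.range μ.len, μ.part i

/-- The number of boxes of the skew shape `ν/μ`. -/
def skewSize (ν μ : IntPartition) : ℕ := ν.size - μ.size

/-- One less than the number of nonempty rows of `ν/μ`. -/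
def height (μ ν : IntPartition) : ℕ :=
  (((Finset.range ν.len).filter (fun i => μ.part i < ν.part i)).card) - 1

/-- The set of boxes of the skew diagram `ν/μ` (rows and columns indexed from 0). -/
def cells (μ ν : IntPartition) : Set (ℕ × ℕ) :=
  {c | μ.part c.1 ≤ c.2 ∧ c.2 < ν.part c.1}

/-- Two boxes are adjacent if they share a common side. -/
def Adj (a b : ℕ × ℕ) : Prop :=
  (a.1 = b.1 ∧ (a.2 + 1 = b.2 ∨ b.2 + 1 = a.2)) ∨
  (a.2 = b.2 ∧ (a.1 + 1 = b.1 ∨ b.1 + 1 = a.1))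

/-- A set of boxes is connected if any two of its boxes are joined by a path of
adjacent boxes within the set. -/
def ConnectedIn (S : Set (ℕ × ℕ)) : Prop :=
  ∀ a ∈ S, ∀ b ∈ S,
    Relation.ReflTransGen (fun u v => u ∈ S ∧ v ∈ S ∧ Adj u v) a b

/-- `ν/μ` is a border strip with `r` boxes: connected and with no 2×2 block. -/
def IsBorderStrip (μ ν : IntPartition) (r : ℕ) : Prop :=
  μ ≤ ν ∧ skewSize ν μ = r ∧ ConnectedIn (cells μ ν) ∧
    ∀ i j : ℕ, ¬ ((i, j) ∈ cells μ ν ∧ (i + 1, j) ∈ cells μ ν ∧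
      (i, j + 1) ∈ cells μ ν ∧ (i + 1, j + 1) ∈ cells μ ν)

/-- `ν/μ` is a vertical strip with `r` boxes (at most one box per row). -/
def IsVerticalStrip (μ ν : IntPartition) (r : ℕ) : Prop :=
  μ ≤ ν ∧ skewSize ν μ = r ∧ ∀ i, ν.part i ≤ μ.part i + 1

/-- `ν/μ` is a horizontal strip with `r` boxes (at most one box per column). -/
def IsHorizontalStrip (μ ν : IntPartition) (r : ℕ) : Prop :=
  μ ≤ ν ∧ skewSize ν μ = r ∧ ∀ i, ν.part (i + 1) ≤ μ.part i

/-- The conjugate partition. -/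
def conj (μ : IntPartition) : IntPartition where
  part j := ((Finset.range μ.len).filter (fun i => j < μ.part i)).card
  antitone := by
    intro i j hij
    apply Finset.card_le_card
    intro a ha
    simp only [Finset.mem_filter] at ha ⊢
    exact ⟨ha.1, lt_of_le_of_lt hij ha.2⟩
  finite := ⟨μ.part 0, by
    intro j hj
    simp only [Finset.card_eq_zero, Finset.filter_eq_empty_iff]
    intro a _
    have := μ.antitone 0 a (Nat.zero_le a)
    omega⟩

end IntPartition
/-- The field of rational functions in `n` variables over `ℚ`. -/
abbrev K (n : ℕ) := FractionRing (MvPolynomial (Fin n) ℚ)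

/-- The variables `x_i`. -/
def X {n : ℕ} (i : Fin n) : K n :=
  algebraMap (MvPolynomial (Fin n) ℚ) (K n) (MvPolynomial.X i)

/-- The power sum polynomial `p_r(x_1,…,x_n)`. -/
def psum (n r : ℕ) : K n := ∑ i : Fin n, X i ^ r

/-- The elementary symmetric polynomial `e_r(x_1,…,x_n)`. -/
def esymm (n r : ℕ) : K n :=
  ∑ s ∈ Finset.powersetCard r (Finset.univ : Finset (Fin n)), ∏ i ∈ s, X i

/-- The complete homogeneous symmetric polynomial `h_r(x_1,…,x_n)`. -/
def hsymm (n r : ℕ) : K n :=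
  ∑ c : Sym (Fin n) r, (c.1.map (fun i => X i)).prod

/-- The Schur polynomial `s_μ(x_1,…,x_n)`, via the bialternant formula
(zero when `μ` has more than `n` parts). -/
def schur (n : ℕ) (μ : IntPartition) : K n :=
  if μ.len ≤ n then
    (Matrix.det (Matrix.of fun i j : Fin n => X i ^ (μ.part j + (n - 1 - (j : ℕ))))) /
      (Matrix.det (Matrix.of fun i j : Fin n => X i ^ (n - 1 - (j : ℕ))))
  else 0

/-!
Multiplying the alternant `a_{μ+δ} = det (x_i ^ (μ_j + n - 1 - j))` by `p_r` and expanding the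
determinant gives `∑_J a_{μ+δ+r e_J}`. If the bumped exponent `μ_J + n - 1 - J + r` equals an
earlier exponent, the term vanishes. Otherwise it lies strictly between the exponents of columns
`a - 1` and `a` for some `a ≤ J`, and sorting the exponents again by the cycle `(a a+1 … J)` (sign
`(-1)^(J - a)`) turns them into `ν + δ`, where `ν/μ` is the border strip in rows `a, …, J`; its
height is `J - a`. Each border strip comes from its last row in this way, so columns without a
collision correspond to border strips with at most `n` rows. Dividing by the Vandermonde
determinant `a_δ` gives the rule.
-/

section Alternant

variable {R : Type*} [CommRing R] {n : ℕ}

def alternant (x : Fin n → R) (α : ℕ → ℕ) : R := (Matrix.of fun i j : Fin n => x i ^ α j).det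

theorem sum_pow_mul_alternant (x : Fin n → R) (α : ℕ → ℕ) (r : ℕ) :
    (∑ i, x i ^ r) * alternant x α =
      ∑ J : Fin n, alternant x (α + (Pi.single (J : ℕ) r : ℕ → ℕ)) := by
  simp only [alternant, Matrix.det_apply', Matrix.of_apply, Finset.mul_sum]
  rw [Finset.sum_comm]
  refine Finset.sum_congr rfl fun σ _ => ?_
  rw [← Equiv.sum_comp σ, Finset.sum_mul]
  refine Finset.sum_congr rfl fun J _ => ?_
  have hsingle : ∏ j : Fin n, x (σ j) ^ (Pi.single (J : ℕ) r : ℕ → ℕ) j = x (σ J) ^ r := by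
    rw [Fintype.prod_eq_single J fun j hj => by
      rw [Pi.single_eq_of_ne (Fin.val_ne_of_ne hj), pow_zero], Pi.single_eq_same]
  simp only [Pi.add_apply, pow_add, Finset.prod_mul_distrib, hsingle]
  ring

theorem alternant_eq_zero_of_eq (x : Fin n → R) {α : ℕ → ℕ} {i j : ℕ} (hij : i ≠ j) (hi : i < n)
    (hj : j < n) (h : α i = α j) : alternant x α = 0 :=
  Matrix.det_zero_of_column_eq (i := ⟨i, hi⟩) (j := ⟨j, hj⟩) (fun hc => hij (Fin.mk.inj hc))
    fun k => by simp [h]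

theorem alternant_eq_sign_mul (x : Fin n → R) {α β : ℕ → ℕ} (σ : Equiv.Perm (Fin n))
    (h : ∀ j : Fin n, α j = β (σ j)) :
    alternant x α = Equiv.Perm.sign σ * alternant x β := by
  have hM : Matrix.of (fun i j : Fin n => x i ^ α j) =
      (Matrix.of fun i j : Fin n => x i ^ β j).submatrix id σ := by
    ext i j
    simp [h]
  rw [alternant, hM, Matrix.det_permute', alternant]

theorem alternant_eq_neg_one_pow_mul_of_rotate (x : Fin n → R) {α β : ℕ → ℕ} {a b : ℕ}
    (hab : a ≤ b) (hb : b < n) (hstart : β a = α b) (hsucc : ∀ i, a ≤ i → i < b → β (i + 1) = α i)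
    (hout : ∀ i, i < a ∨ b < i → β i = α i) :
    alternant x α = (-1) ^ (b - a) * alternant x β := by
  have : NeZero n := ⟨by omega⟩
  set A : Fin n := ⟨a, by omega⟩
  set B : Fin n := ⟨b, hb⟩
  have hσ : ∀ j : Fin n, α j = β (Fin.cycleIcc A B j) := by
    intro j
    rcases lt_or_ge (j : ℕ) a with hja | haj
    · rw [Fin.cycleIcc_of_lt (show j < A from hja), hout j (.inl hja)]
    rcases lt_or_ge b (j : ℕ) with hbj | hjb
    · rw [Fin.cycleIcc_of_gt (show B < j from hbj), hout j (.inr hbj)]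
    rw [Fin.cycleIcc_of_le_of_le (show A ≤ j from haj) (show j ≤ B from hjb)]
    split_ifs with hjB
    · rw [hjB]
      exact hstart.symm
    · have hjb' : (j : ℕ) < b := lt_of_le_of_ne hjb fun h => hjB (Fin.ext h)
      rw [Fin.val_add_one_of_lt' (by omega), hsucc j haj hjb']
  rw [alternant_eq_sign_mul x _ hσ, Fin.sign_cycleIcc_of_le (show A ≤ B from hab)]
  push_cast
  rfl

end Alternant

namespace IntPartition

theorem ext {μ ν : IntPartition} (h : ∀ i, μ.part i = ν.part i) : μ = ν := by
  cases μ; cases ν; simp only [mk.injEq]; exact funext h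

theorem part_len (μ : IntPartition) : μ.part μ.len = 0 :=
  Nat.find_spec (p := fun N => μ.part N = 0) _

theorem len_le_of_part_eq_zero (μ : IntPartition) {i : ℕ} (h : μ.part i = 0) : μ.len ≤ i :=
  Nat.find_min' _ h

theorem part_eq_zero_of_len_le (μ : IntPartition) {i : ℕ} (h : μ.len ≤ i) : μ.part i = 0 :=
  Nat.le_zero.mp (μ.part_len ▸ μ.antitone _ _ h)

theorem lt_len_of_pos (μ : IntPartition) {i : ℕ} (h : 0 < μ.part i) : i < μ.len :=
  not_le.mp fun hi => h.ne' (μ.part_eq_zero_of_len_le hi)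

theorem size_eq_sum_range (μ : IntPartition) {M : ℕ} (h : μ.len ≤ M) :
    μ.size = ∑ i ∈ Finset.range M, μ.part i := by
  rw [size, ← Finset.sum_range_add_sum_Ico _ h, left_eq_add]
  exact Finset.sum_eq_zero fun i hi => μ.part_eq_zero_of_len_le (Finset.mem_Ico.mp hi).1

theorem len_le_len {μ ν : IntPartition} (h : μ ≤ ν) : μ.len ≤ ν.len :=
  μ.len_le_of_part_eq_zero (Nat.le_zero.mp (ν.part_len ▸ h ν.len))

theorem size_le_size {μ ν : IntPartition} (h : μ ≤ ν) : μ.size ≤ ν.size := by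
  rw [μ.size_eq_sum_range (len_le_len h), ν.size_eq_sum_range le_rfl]
  exact Finset.sum_le_sum fun i _ => h i

theorem sum_Icc_add_eq_of_strip {f g : ℕ → ℕ} {a b : ℕ} (hab : a ≤ b)
    (hsucc : ∀ i, a ≤ i → i < b → f (i + 1) = g i + 1) :
    ∑ i ∈ Finset.Icc a b, f i + (g b + a) = ∑ i ∈ Finset.Icc a b, g i + (f a + b) := by
  induction b, hab using Nat.le_induction with
  | base => simp; omega
  | succ b hab ih =>
    rw [← Finset.insert_Icc_right_eq_Icc_add_one (by omega), Finset.sum_insert (by simp),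
      Finset.sum_insert (by simp)]
    have := ih fun i h1 h2 => hsucc i h1 (by omega)
    have := hsucc b hab (by omega)
    omega

theorem size_add_eq_of_strip {μ ν : IntPartition} {a b : ℕ} (hab : a ≤ b)
    (hlo : ∀ i < a, ν.part i = μ.part i) (hhi : ∀ i, b < i → ν.part i = μ.part i)
    (hsucc : ∀ i, a ≤ i → i < b → ν.part (i + 1) = μ.part i + 1) :
    ν.size + (μ.part b + a) = μ.size + (ν.part a + b) := by
  set M := μ.len + ν.len + b + 1
  have split : ∀ f : ℕ → ℕ, ∑ i ∈ Finset.range M, f i =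
      ∑ i ∈ Finset.range a, f i + ∑ i ∈ Finset.Icc a b, f i + ∑ i ∈ Finset.Ico (b + 1) M, f i := by
    intro f
    rw [← Finset.sum_range_add_sum_Ico f (show b + 1 ≤ M by omega),
      ← Finset.sum_range_add_sum_Ico f (show a ≤ b + 1 by omega), Finset.Ico_add_one_right_eq_Icc]
  have hlo' : ∑ i ∈ Finset.range a, ν.part i = ∑ i ∈ Finset.range a, μ.part i :=
    Finset.sum_congr rfl fun i hi => hlo i (Finset.mem_range.mp hi)
  have hhi' : ∑ i ∈ Finset.Ico (b + 1) M, ν.part i = ∑ i ∈ Finset.Ico (b + 1) M, μ.part i :=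
    Finset.sum_congr rfl fun i hi => hhi i (Finset.mem_Ico.mp hi).1
  have hmid := sum_Icc_add_eq_of_strip hab hsucc
  rw [ν.size_eq_sum_range (M := M) (by omega), μ.size_eq_sum_range (M := M) (by omega), split,
    split]
  omega

theorem mem_cells {μ ν : IntPartition} {i c : ℕ} :
    (i, c) ∈ cells μ ν ↔ μ.part i ≤ c ∧ c < ν.part i := Iff.rfl

def CellAdj (S : Set (ℕ × ℕ)) (u v : ℕ × ℕ) : Prop := u ∈ S ∧ v ∈ S ∧ Adj u v

instance (S : Set (ℕ × ℕ)) : Std.Symm (CellAdj S) :=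
  ⟨fun _ _ ⟨hu, hv, huv⟩ => ⟨hv, hu, by unfold Adj at *; omega⟩⟩

theorem reflTransGen_cellAdj_row {μ ν : IntPartition} {i c d : ℕ} (hc : μ.part i ≤ c)
    (hcd : c ≤ d) (hd : d < ν.part i) :
    Relation.ReflTransGen (CellAdj (cells μ ν)) (i, c) (i, d) := by
  induction d, hcd using Nat.le_induction with
  | base => exact .refl
  | succ d hcd ih =>
    exact (ih (by omega)).tail
      ⟨mem_cells.2 ⟨by omega, by omega⟩, mem_cells.2 ⟨by omega, hd⟩, .inl ⟨rfl, .inl rfl⟩⟩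

theorem exists_vertical_of_reflTransGen {S : Set (ℕ × ℕ)} {u w : ℕ × ℕ}
    (h : Relation.ReflTransGen (CellAdj S) u w) {m : ℕ} (hum : u.1 ≤ m) (hmw : m < w.1) :
    ∃ c, (m, c) ∈ S ∧ (m + 1, c) ∈ S := by
  induction h with
  | refl => omega
  | @tail p q _ hpq ih =>
    rcases lt_or_ge m p.1 with hmp | hpm
    · exact ih hmp
    obtain ⟨hp, hq, hadj⟩ := hpq
    obtain ⟨hq1, hq2⟩ : q.1 = m + 1 ∧ q.2 = p.2 := by unfold Adj at hadj; omega
    obtain rfl : p.1 = m := by unfold Adj at hadj; omega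
    exact ⟨p.2, hp, hq1 ▸ hq2 ▸ hq⟩

/-- Otherwise `(i, μ_i)` would be the corner of a `2 × 2` block. -/
theorem part_succ_eq_of_vertical {μ ν : IntPartition}
    (hblock : ∀ i j : ℕ, ¬ ((i, j) ∈ cells μ ν ∧ (i + 1, j) ∈ cells μ ν ∧
      (i, j + 1) ∈ cells μ ν ∧ (i + 1, j + 1) ∈ cells μ ν))
    {i c : ℕ} (hc : (i, c) ∈ cells μ ν) (hc' : (i + 1, c) ∈ cells μ ν) :
    ν.part (i + 1) = μ.part i + 1 := by
  rw [mem_cells] at hc hc'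
  have hμ := μ.antitone i (i + 1) (by omega)
  have hν := ν.antitone i (i + 1) (by omega)
  by_contra hne
  exact hblock i (μ.part i) ⟨mem_cells.2 ⟨le_rfl, by omega⟩, mem_cells.2 ⟨hμ, by omega⟩,
    mem_cells.2 ⟨by omega, by omega⟩, mem_cells.2 ⟨by omega, by omega⟩⟩

/-- `ν/μ` is a border strip of size `r` whose nonempty rows are exactly `a, …, b`. -/
structure IsBorderStripOn (μ ν : IntPartition) (a b r : ℕ) : Prop where
  le_end : a ≤ b
  part_eq_of_lt : ∀ i < a, ν.part i = μ.part i
  part_eq_of_gt : ∀ i, b < i → ν.part i = μ.part i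
  part_lt : ∀ i, a ≤ i → i ≤ b → μ.part i < ν.part i
  /-- consecutive rows of the strip overlap in exactly one column -/
  part_succ : ∀ i, a ≤ i → i < b → ν.part (i + 1) = μ.part i + 1
  part_start : ν.part a + b = μ.part b + a + r

namespace IsBorderStripOn

variable {μ ν : IntPartition} {a b r : ℕ}

theorem le (h : IsBorderStripOn μ ν a b r) : μ ≤ ν := fun i => by
  rcases lt_or_ge i a with hia | hai
  · exact (h.part_eq_of_lt i hia).ge
  rcases le_or_gt i b with hib | hbi
  · exact (h.part_lt i hai hib).le
  · exact (h.part_eq_of_gt i hbi).ge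

theorem lt_part_iff (h : IsBorderStripOn μ ν a b r) (i : ℕ) :
    μ.part i < ν.part i ↔ a ≤ i ∧ i ≤ b := by
  refine ⟨fun hi => ⟨?_, ?_⟩, fun hi => h.part_lt i hi.1 hi.2⟩
  · by_contra hia
    exact hi.ne' (h.part_eq_of_lt i (not_le.mp hia))
  · by_contra hbi
    exact hi.ne' (h.part_eq_of_gt i (not_le.mp hbi))

theorem end_lt_len (h : IsBorderStripOn μ ν a b r) : b < ν.len :=
  ν.lt_len_of_pos (Nat.zero_lt_of_lt (h.part_lt b h.le_end le_rfl))

theorem skewSize_eq (h : IsBorderStripOn μ ν a b r) : skewSize ν μ = r := by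
  have := size_add_eq_of_strip h.le_end h.part_eq_of_lt h.part_eq_of_gt h.part_succ
  have := h.part_start
  unfold skewSize
  omega

theorem height_eq (h : IsBorderStripOn μ ν a b r) : height μ ν = b - a := by
  have rows : (Finset.range ν.len).filter (fun i => μ.part i < ν.part i) = Finset.Icc a b := by
    ext i
    simp only [Finset.mem_filter, Finset.mem_range, Finset.mem_Icc, h.lt_part_iff]
    exact ⟨And.right, fun hi => ⟨lt_of_le_of_lt hi.2 h.end_lt_len, hi⟩⟩
  rw [height, rows, Nat.card_Icc]
  omega

/-- Row `i + 1` of the strip meets row `i` in column `μ_i`. -/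
theorem reflTransGen_start (h : IsBorderStripOn μ ν a b r) {i : ℕ} (hai : a ≤ i) (hib : i ≤ b) :
    Relation.ReflTransGen (CellAdj (cells μ ν)) (i, μ.part i) (a, μ.part a) := by
  induction i, hai using Nat.le_induction with
  | base => exact .refl
  | succ i hai ih =>
    have hsucc := h.part_succ i hai (by omega)
    have hrow := h.part_lt i hai (by omega)
    have hμ := μ.antitone i (i + 1) (by omega)
    have down : CellAdj (cells μ ν) (i + 1, μ.part i) (i, μ.part i) :=
      ⟨mem_cells.2 ⟨hμ, by omega⟩, mem_cells.2 ⟨le_rfl, hrow⟩, .inr ⟨rfl, .inr rfl⟩⟩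
    exact ((reflTransGen_cellAdj_row le_rfl hμ (by omega)).tail down).trans (ih (by omega))

theorem connectedIn (h : IsBorderStripOn μ ν a b r) : ConnectedIn (cells μ ν) := by
  have toStart : ∀ u ∈ cells μ ν, Relation.ReflTransGen (CellAdj (cells μ ν)) u (a, μ.part a) := by
    rintro ⟨i, c⟩ hu
    obtain ⟨hc, hcν⟩ := mem_cells.1 hu
    obtain ⟨hai, hib⟩ := (h.lt_part_iff i).mp (by omega)
    exact (_root_.symm (reflTransGen_cellAdj_row le_rfl hc hcν)).trans
      (h.reflTransGen_start hai hib)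
  exact fun u hu w hw => (toStart u hu).trans (_root_.symm (toStart w hw))

theorem isBorderStrip (h : IsBorderStripOn μ ν a b r) : IsBorderStrip μ ν r := by
  refine ⟨h.le, h.skewSize_eq, h.connectedIn, ?_⟩
  rintro i j ⟨h1, -, -, h4⟩
  rw [mem_cells] at h1 h4
  obtain ⟨hai, -⟩ := (h.lt_part_iff i).mp (by omega)
  obtain ⟨-, hib⟩ := (h.lt_part_iff (i + 1)).mp (by omega)
  have := h.part_succ i hai (by omega)
  omega

end IsBorderStripOn

theorem IsBorderStrip.exists_isBorderStripOn {μ ν : IntPartition} {r : ℕ} (hr : 1 ≤ r)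
    (h : IsBorderStrip μ ν r) : ∃ a b, IsBorderStripOn μ ν a b r := by
  obtain ⟨hle, hsize, hconn, hblock⟩ := h
  set rows := (Finset.range ν.len).filter (fun i => μ.part i < ν.part i)
  have mem_rows : ∀ i, i ∈ rows ↔ μ.part i < ν.part i := fun i => by
    simp only [rows, Finset.mem_filter, Finset.mem_range]
    exact ⟨And.right, fun hi => ⟨ν.lt_len_of_pos (by omega), hi⟩⟩
  have hne : rows.Nonempty := by
    by_contra hempty
    have hνμ : ν = μ := ext fun i => le_antisymm
      (not_lt.mp fun hi => hempty ⟨i, (mem_rows i).mpr hi⟩) (hle i)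
    simp [hνμ, skewSize] at hsize
    omega
  set a := rows.min' hne
  set b := rows.max' hne
  have ha : μ.part a < ν.part a := (mem_rows a).mp (rows.min'_mem hne)
  have hb : μ.part b < ν.part b := (mem_rows b).mp (rows.max'_mem hne)
  have hab : a ≤ b := rows.min'_le b (rows.max'_mem hne)
  have hlo : ∀ i < a, ν.part i = μ.part i := fun i hi => le_antisymm
    (not_lt.mp fun h' => (rows.min'_le i ((mem_rows i).mpr h')).not_gt hi) (hle i)
  have hhi : ∀ i, b < i → ν.part i = μ.part i := fun i hi => le_antisymm
    (not_lt.mp fun h' => (rows.le_max' i ((mem_rows i).mpr h')).not_gt hi) (hle i)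
  have vertical : ∀ i, a ≤ i → i < b → ∃ c, (i, c) ∈ cells μ ν ∧ (i + 1, c) ∈ cells μ ν :=
    fun i hai hib => exists_vertical_of_reflTransGen
      (hconn _ (mem_cells.2 ⟨le_rfl, ha⟩) _ (mem_cells.2 ⟨le_rfl, hb⟩)) hai hib
  have hsucc : ∀ i, a ≤ i → i < b → ν.part (i + 1) = μ.part i + 1 := fun i hai hib => by
    obtain ⟨c, hc, hc'⟩ := vertical i hai hib
    exact part_succ_eq_of_vertical hblock hc hc'
  refine ⟨a, b, hab, hlo, hhi, fun i hai hib => ?_, hsucc, ?_⟩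
  · rcases hib.lt_or_eq with hib | rfl
    · obtain ⟨c, hc, -⟩ := vertical i hai hib
      rw [mem_cells] at hc
      omega
    · exact hb
  · have := size_add_eq_of_strip hab hlo hhi hsucc
    have := size_le_size hle
    unfold skewSize at hsize
    omega

section Exponents

variable {μ ν ν' : IntPartition} {n r a a' b J : ℕ}

/-- The exponents `μ + δ` of the bialternant numerator of `s_μ` in `n` variables. -/
def shifted (μ : IntPartition) (n i : ℕ) : ℕ := μ.part i + (n - 1 - i)

theorem shifted_lt_shifted (μ : IntPartition) {i j : ℕ} (hij : i < j) (hj : j < n) :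
    μ.shifted n j < μ.shifted n i := by
  have := μ.antitone i j hij.le
  unfold shifted
  omega

/-- Adding `r` to the `J`-th exponent of `μ + δ` repeats no exponent (later exponents are
smaller, so only earlier ones can collide). -/
def NoCollision (μ : IntPartition) (n r J : ℕ) : Prop :=
  ∀ i < J, μ.shifted n i ≠ μ.shifted n J + r

theorem alternant_shifted_add_single_eq_zero {R : Type*} [CommRing R] (x : Fin n → R)
    (hJ : J < n) (h : ¬ μ.NoCollision n r J) :
    alternant x (μ.shifted n + (Pi.single J r : ℕ → ℕ)) = 0 := by
  obtain ⟨i, hiJ, hi⟩ : ∃ i < J, μ.shifted n i = μ.shifted n J + r := by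
    simpa [NoCollision] using h
  refine alternant_eq_zero_of_eq x hiJ.ne (hiJ.trans hJ) hJ ?_
  simp [Pi.single_eq_of_ne hiJ.ne, hi]

namespace IsBorderStripOn

theorem shifted_start (h : IsBorderStripOn μ ν a b r) (hb : b < n) :
    ν.shifted n a = μ.shifted n b + r := by
  have := h.part_start
  have := h.le_end
  unfold shifted
  omega

theorem lt_shifted_of_lt_start (h : IsBorderStripOn μ ν a b r) (hb : b < n) {i : ℕ} (hia : i < a) :
    μ.shifted n b + r < μ.shifted n i := by
  have hνμ : ν.shifted n i = μ.shifted n i := by rw [shifted, shifted, h.part_eq_of_lt i hia]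
  rw [← h.shifted_start hb, ← hνμ]
  exact ν.shifted_lt_shifted hia (by have := h.le_end; omega)

theorem shifted_lt_of_start_le (h : IsBorderStripOn μ ν a b r) (hb : b < n) {i : ℕ} (hai : a ≤ i)
    (hib : i ≤ b) : μ.shifted n i < μ.shifted n b + r := by
  rw [← h.shifted_start hb]
  have hstart := h.part_lt a le_rfl h.le_end
  have hμ := μ.antitone a i hai
  rcases hib.lt_or_eq with hib | rfl
  · have := h.part_succ i hai hib
    have := ν.antitone a (i + 1) (by omega)
    unfold shifted
    omega
  · unfold shifted
    omega

theorem noCollision (h : IsBorderStripOn μ ν a b r) (hb : b < n) : μ.NoCollision n r b := by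
  intro i hib
  rcases lt_or_ge i a with hia | hai
  · exact (h.lt_shifted_of_lt_start hb hia).ne'
  · exact (h.shifted_lt_of_start_le hb hai hib.le).ne

/-- The first row is the position of `μ.shifted n b + r` among the exponents of `μ`. -/
theorem start_eq (h : IsBorderStripOn μ ν a b r) (h' : IsBorderStripOn μ ν' a' b r) (hb : b < n) :
    a = a' := by
  refine le_antisymm (not_lt.mp fun ha'a => ?_) (not_lt.mp fun haa' => ?_)
  · exact (h.lt_shifted_of_lt_start hb ha'a).not_gt
      (h'.shifted_lt_of_start_le hb le_rfl ((h.le_end).trans' ha'a.le))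
  · exact (h'.lt_shifted_of_lt_start hb haa').not_gt
      (h.shifted_lt_of_start_le hb le_rfl ((h'.le_end).trans' haa'.le))

theorem eq (h : IsBorderStripOn μ ν a b r) (h' : IsBorderStripOn μ ν' a b r) : ν = ν' := by
  refine ext fun i => ?_
  rcases lt_trichotomy i a with hia | rfl | hai
  · rw [h.part_eq_of_lt i hia, h'.part_eq_of_lt i hia]
  · have := h.part_start
    have := h'.part_start
    omega
  rcases le_or_gt i b with hib | hbi
  · obtain ⟨k, rfl⟩ : ∃ k, i = k + 1 := ⟨i - 1, by omega⟩
    rw [h.part_succ k (by omega) (by omega), h'.part_succ k (by omega) (by omega)]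
  · rw [h.part_eq_of_gt i hbi, h'.part_eq_of_gt i hbi]

theorem alternant_shifted_add_single {R : Type*} [CommRing R] (h : IsBorderStripOn μ ν a b r)
    (hb : b < n) (x : Fin n → R) :
    alternant x (μ.shifted n + (Pi.single b r : ℕ → ℕ)) =
      (-1) ^ (b - a) * alternant x (ν.shifted n) := by
  refine alternant_eq_neg_one_pow_mul_of_rotate x h.le_end hb ?_ (fun i hai hib => ?_)
    (fun i hi => ?_)
  · simp [h.shifted_start hb]
  · have := h.part_succ i hai hib
    simp only [Pi.add_apply, Pi.single_eq_of_ne hib.ne, add_zero, shifted]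
    omega
  · have hib : i ≠ b := by have := h.le_end; omega
    simp only [Pi.add_apply, Pi.single_eq_of_ne hib, add_zero, shifted]
    rcases hi with hi | hi
    · rw [h.part_eq_of_lt i hi]
    · rw [h.part_eq_of_gt i hi]

end IsBorderStripOn

end Exponents

section AddStrip

variable {μ ν : IntPartition} {n r a b J : ℕ}

/-- The column into which the bumped exponent `μ.shifted n J + r` moves when the exponents are
sorted again; it is the first row of the border strip ending in row `J`. -/
def stripStart (μ : IntPartition) (n r J : ℕ) : ℕ :=
  Nat.find (p := fun i => μ.shifted n i ≤ μ.shifted n J + r) ⟨J, Nat.le_add_right _ _⟩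

theorem stripStart_le : μ.stripStart n r J ≤ J :=
  Nat.find_min' _ (Nat.le_add_right _ _)

theorem lt_shifted_of_lt_stripStart {i : ℕ} (hi : i < μ.stripStart n r J) :
    μ.shifted n J + r < μ.shifted n i :=
  not_le.mp (Nat.find_min (p := fun i => μ.shifted n i ≤ μ.shifted n J + r) _ hi)

theorem shifted_stripStart_lt (hr : 1 ≤ r) (hnd : μ.NoCollision n r J) :
    μ.shifted n (μ.stripStart n r J) < μ.shifted n J + r := by
  have hle : μ.shifted n (μ.stripStart n r J) ≤ μ.shifted n J + r :=
    Nat.find_spec (p := fun i => μ.shifted n i ≤ μ.shifted n J + r) _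
  rcases stripStart_le.lt_or_eq with hlt | heq
  · exact lt_of_le_of_ne hle (hnd _ hlt)
  · rw [heq]
    omega

/-- `μ` with a border strip of size `r` added in rows `stripStart μ n r J, …, J`. -/
def stripPart (μ : IntPartition) (n r J i : ℕ) : ℕ :=
  if i < μ.stripStart n r J then μ.part i
  else if i = μ.stripStart n r J then μ.part J + r - (J - μ.stripStart n r J)
  else if i ≤ J then μ.part (i - 1) + 1
  else μ.part i

theorem stripPart_succ_le (hr : 1 ≤ r) (hJ : J < n) (hnd : μ.NoCollision n r J) (i : ℕ) :
    μ.stripPart n r J (i + 1) ≤ μ.stripPart n r J i := by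
  have hpJ : μ.stripStart n r J ≤ J := stripStart_le
  have hstart : i = μ.stripStart n r J → μ.part i + (J - i) < μ.part J + r := by
    rintro rfl
    have := shifted_stripStart_lt hr hnd
    unfold shifted at this
    omega
  have hbefore : i + 1 = μ.stripStart n r J → μ.part J + r < μ.part i + (J - i) := by
    intro hi
    have := lt_shifted_of_lt_stripStart (show i < μ.stripStart n r J by omega)
    unfold shifted at this
    omega
  have h1 := μ.antitone i (i + 1) (by omega)
  have h2 := μ.antitone (i - 1) i (by omega)
  have h3 : J ≤ i → μ.part (i + 1) ≤ μ.part J := fun hJi => μ.antitone J (i + 1) (by omega)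
  unfold stripPart
  simp only [Nat.add_sub_cancel]
  split_ifs <;> omega

def addStrip (μ : IntPartition) (hr : 1 ≤ r) (hJ : J < n) (hnd : μ.NoCollision n r J) :
    IntPartition where
  part := μ.stripPart n r J
  antitone _ _ hij := antitone_nat_of_succ_le (stripPart_succ_le hr hJ hnd) hij
  finite := ⟨μ.len + J + 1, fun i hi => by
    have := stripStart_le (μ := μ) (n := n) (r := r) (J := J)
    rw [stripPart, if_neg (by omega), if_neg (by omega), if_neg (by omega)]
    exact μ.part_eq_zero_of_len_le (by omega)⟩

theorem isBorderStripOn_addStrip (hr : 1 ≤ r) (hJ : J < n) (hnd : μ.NoCollision n r J) :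
    IsBorderStripOn μ (μ.addStrip hr hJ hnd) (μ.stripStart n r J) J r := by
  have hpJ : μ.stripStart n r J ≤ J := stripStart_le
  have hstart := shifted_stripStart_lt hr hnd
  unfold shifted at hstart
  have hμ := μ.antitone (μ.stripStart n r J) J hpJ
  refine ⟨hpJ, fun i hi => if_pos hi, fun i hi => ?_, fun i hai hiJ => ?_, fun i hai hiJ => ?_, ?_⟩
  · simp only [addStrip, stripPart]
    rw [if_neg (by omega), if_neg (by omega), if_neg (by omega)]
  · simp only [addStrip, stripPart]
    rcases hai.lt_or_eq with hai | rfl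
    · have := μ.antitone (i - 1) i (by omega)
      rw [if_neg (by omega), if_neg (by omega), if_pos hiJ]
      omega
    · simp only [lt_irrefl, ↓reduceIte]
      omega
  · simp only [addStrip, stripPart]
    rw [if_neg (by omega), if_neg (by omega), if_pos (by omega), Nat.add_sub_cancel]
  · simp only [addStrip, stripPart, lt_irrefl, ↓reduceIte]
    omega

theorem len_addStrip_le (hμ : μ.len ≤ n) (hr : 1 ≤ r) (hJ : J < n) (hnd : μ.NoCollision n r J) :
    (μ.addStrip hr hJ hnd).len ≤ n := by
  refine len_le_of_part_eq_zero _ ?_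
  rw [(isBorderStripOn_addStrip hr hJ hnd).part_eq_of_gt n hJ]
  exact μ.part_eq_zero_of_len_le hμ

def lastRow (μ ν : IntPartition) : ℕ := Nat.findGreatest (fun i => μ.part i < ν.part i) ν.len

theorem IsBorderStripOn.lastRow_eq (h : IsBorderStripOn μ ν a b r) : lastRow μ ν = b :=
  Nat.findGreatest_eq_iff.mpr ⟨h.end_lt_len.le, fun _ => h.part_lt b h.le_end le_rfl,
    fun _ hbi _ hi => by have := (h.lt_part_iff _).mp hi; omega⟩

theorem bijOn_lastRow (hr : 1 ≤ r) (hμ : μ.len ≤ n) :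
    Set.BijOn (lastRow μ) {ν | IsBorderStrip μ ν r ∧ ν.len ≤ n}
      {J | J < n ∧ μ.NoCollision n r J} := by
  refine ⟨fun ν ⟨hν, hlen⟩ => ?_, fun ν ⟨hν, hlen⟩ ν' ⟨hν', _⟩ hlast => ?_, fun J ⟨hJ, hnd⟩ => ?_⟩
  · obtain ⟨a, b, h⟩ := hν.exists_isBorderStripOn hr
    have hb : b < n := h.end_lt_len.trans_le hlen
    rw [h.lastRow_eq]
    exact ⟨hb, h.noCollision hb⟩
  · obtain ⟨a, b, h⟩ := hν.exists_isBorderStripOn hr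
    obtain ⟨a', b', h'⟩ := hν'.exists_isBorderStripOn hr
    obtain rfl : b = b' := h.lastRow_eq.symm.trans (hlast.trans h'.lastRow_eq)
    obtain rfl := h.start_eq h' (h.end_lt_len.trans_le hlen)
    exact h.eq h'
  · have h := isBorderStripOn_addStrip hr hJ hnd
    exact ⟨_, ⟨h.isBorderStrip, len_addStrip_le hμ hr hJ hnd⟩, h.lastRow_eq⟩

end AddStrip

end IntPartition

open IntPartition

theorem schur_eq_alternant_div {n : ℕ} {μ : IntPartition} (h : μ.len ≤ n) :
    schur n μ = alternant X (μ.shifted n) / alternant X (fun i => n - 1 - i) := by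
  rw [schur, if_pos h]
  rfl

theorem schur_eq_zero {n : ℕ} {μ : IntPartition} (h : n < μ.len) : schur n μ = 0 :=
  if_neg (not_le.mpr h)

theorem IntPartition.IsBorderStripOn.neg_one_pow_height_mul_schur {n r a b : ℕ}
    {μ ν : IntPartition} (h : IsBorderStripOn μ ν a b r) (hν : ν.len ≤ n) :
    (-1 : K n) ^ height μ ν * schur n ν =
      alternant X (μ.shifted n + (Pi.single b r : ℕ → ℕ)) / alternant X (fun i => n - 1 - i) := by
  rw [schur_eq_alternant_div hν, h.height_eq,
    h.alternant_shifted_add_single (h.end_lt_len.trans_le hν), mul_div_assoc]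

/-- The Murnaghan–Nakayama rule: for a partition `μ` with at most `n` parts and
a positive integer `r`, `p_r · s_μ = Σ_{ν/μ ∈ BS(r)} (-1)^{ht(ν/μ)} s_ν`. -/
theorem murnaghan_nakayama (n r : ℕ) (hr : 1 ≤ r) (μ : IntPartition) (hμ : μ.len ≤ n) :
    psum n r * schur n μ =
      ∑ᶠ ν ∈ {ν | IntPartition.IsBorderStrip μ ν r},
        (-1 : K n) ^ IntPartition.height μ ν * schur n ν := by
  set bumped : ℕ → K n := fun J =>
    alternant X (μ.shifted n + (Pi.single J r : ℕ → ℕ)) / alternant X (fun i => n - 1 - i)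
  calc psum n r * schur n μ = ∑ J ∈ Finset.range n, bumped J := by
        rw [schur_eq_alternant_div hμ, ← mul_div_assoc, psum, sum_pow_mul_alternant,
          Finset.sum_div, Fin.sum_univ_eq_sum_range (fun J => bumped J)]
    _ = ∑ᶠ J ∈ {J | J < n ∧ μ.NoCollision n r J}, bumped J := by
        rw [← finsum_mem_coe_finset]
        refine finsum_mem_inter_support_eq' _ _ _ fun J hJ => ?_
        simp only [Finset.coe_range, Set.mem_Iio, Set.mem_ofPred, iff_self_and]
        intro hJn
        by_contra hnd
        exact hJ (by simp [bumped, alternant_shifted_add_single_eq_zero X hJn hnd])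
    _ = ∑ᶠ ν ∈ {ν | IsBorderStrip μ ν r ∧ ν.len ≤ n}, (-1 : K n) ^ height μ ν * schur n ν := by
        refine (finsum_mem_eq_of_bijOn _ (bijOn_lastRow hr hμ) fun ν ⟨hν, hlen⟩ => ?_).symm
        obtain ⟨a, b, h⟩ := hν.exists_isBorderStripOn hr
        rw [h.lastRow_eq, h.neg_one_pow_height_mul_schur hlen]
    _ = _ := by
        refine finsum_mem_inter_support_eq' _ _ _ fun ν hν => and_iff_left_of_imp fun _ => ?_
        by_contra hlen
        exact hν (by simp [schur_eq_zero (not_le.mp hlen)])
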